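/- Let f: ℝ → (−∞,+∞] be convex, increasing and lower semicontinuous with effective domain a neighborhood of zero. If 0 belongs to the effective domain of (f∘exp)*, then (f∘exp)*(0) = inf_{α≥0} f*(α). -/

import Mathlib

/-!
The left-hand side is `sup_{x > 0} -f x`, and since `f` is increasing it is dominated by every
`f*(α)` with `α ≥ 0`. Conversely, convexity and finiteness of `f` to the right of `0` make `f`
right-continuous at `0`, so the left-hand side equals `-f 0`. For `x > 0` with `f x` finite, the
chord of `f` over `[0, x]` minorizes `f` outside `(0, x)`, and monotonicity bounds `f` by `f 0` on
`(0, x)`; hence `f*` at the slope of that chord is at most `f x - 2 f 0`, which tends to `-f 0`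
as `x → 0⁺`.
-/

open scoped EReal

/-- The Legendre–Fenchel transform of an extended-real-valued function on `ℝ`. -/
noncomputable def eConj (f : ℝ → EReal) (a : ℝ) : EReal :=
  ⨆ t : ℝ, ((a * t : ℝ) : EReal) - f t

open Filter Set Topology

def EConvex (f : ℝ → EReal) : Prop :=
  ∀ x y s : ℝ, 0 ≤ s → s ≤ 1 →
    f (s * x + (1 - s) * y) ≤ (s : EReal) * f x + ((1 - s : ℝ) : EReal) * f y

section Conjugate

variable (f : ℝ → EReal)

lemma neg_le_eConj_comp_exp_zero {x : ℝ} (hx : 0 < x) :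
    -f x ≤ eConj (fun t => f (Real.exp t)) 0 :=
  le_iSup_of_le (Real.log x) (by simp [Real.exp_log hx])

lemma eConj_comp_exp_zero_le {α : ℝ} (hα : 0 ≤ α) :
    eConj (fun t => f (Real.exp t)) 0 ≤ eConj f α := by
  refine iSup_le fun t => ?_
  calc ((0 * t : ℝ) : EReal) - f (Real.exp t) = 0 - f (Real.exp t) := by simp
    _ ≤ ((α * Real.exp t : ℝ) : EReal) - f (Real.exp t) :=
      EReal.sub_le_sub (by exact_mod_cast mul_nonneg hα (Real.exp_pos t).le) le_rfl
    _ ≤ eConj f α := le_iSup (fun u => ((α * u : ℝ) : EReal) - f u) (Real.exp t)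

end Conjugate

namespace EConvex

variable {f : ℝ → EReal}

lemma coe_le_of_le_apply_combo (hf : EConvex f) {x y s Y Z : ℝ} (hs₀ : 0 < s) (hs₁ : s ≤ 1)
    (hY : f y = Y) (hZ : (Z : EReal) ≤ f (s * x + (1 - s) * y)) :
    (((Z - (1 - s) * Y) / s : ℝ) : EReal) ≤ f x := by
  have hcomb := hZ.trans (hf x y s hs₀.le hs₁)
  rw [hY] at hcomb
  induction hX : f x using EReal.rec with
  | bot =>
    rw [hX, EReal.coe_mul_bot_of_pos hs₀, EReal.bot_add] at hcomb
    exact absurd hcomb (not_le.2 (EReal.bot_lt_coe Z))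
  | coe X =>
    rw [hX] at hcomb
    have : Z ≤ s * X + (1 - s) * Y := by exact_mod_cast hcomb
    exact EReal.coe_le_coe_iff.2 ((div_le_iff₀ hs₀).2 (by linarith))
  | top => exact le_top

lemma coe_chord_le (hf : EConvex f) {a b t A B : ℝ} (hab : a < b) (hA : f a = A) (hB : f b = B)
    (ht : t ∉ Ioo a b) : ((A + (B - A) / (b - a) * (t - a) : ℝ) : EReal) ≤ f t := by
  have hba : 0 < b - a := by linarith
  rcases le_or_gt t a with hta | hat
  · have hbt : 0 < b - t := by linarith
    have hpt : (b - a) / (b - t) * t + (1 - (b - a) / (b - t)) * b = a := by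
      field_simp
      ring
    have key := hf.coe_le_of_le_apply_combo (x := t) (Z := A) (div_pos hba hbt)
      ((div_le_one hbt).2 (by linarith)) hB (by rw [hpt, hA])
    convert key using 2
    field_simp
    ring
  · have hbt : b ≤ t := not_lt.1 fun h => ht ⟨hat, h⟩
    have hta : 0 < t - a := by linarith
    have hpt : (b - a) / (t - a) * t + (1 - (b - a) / (t - a)) * a = b := by
      field_simp
      ring
    have key := hf.coe_le_of_le_apply_combo (x := t) (Z := B) (div_pos hba hta)
      ((div_le_one hta).2 (by linarith)) hA (by rw [hpt, hB])
    convert key using 2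
    field_simp
    ring

lemma eConj_chord_slope_le (hf : EConvex f) (hmono : Monotone f) {a b A B : ℝ} (hab : a < b)
    (hA : f a = A) (hB : f b = B) :
    eConj f ((B - A) / (b - a)) ≤ (((B - A) / (b - a) * b - A : ℝ) : EReal) := by
  set α := (B - A) / (b - a)
  have hAB : A ≤ B := by exact_mod_cast hA ▸ hB ▸ hmono hab.le
  have hα : 0 ≤ α := div_nonneg (sub_nonneg.2 hAB) (by linarith)
  refine iSup_le fun t => ?_
  obtain ⟨ℓ, hℓ, hℓt⟩ :
      ∃ ℓ : ℝ, (ℓ : EReal) ≤ f t ∧ α * t - ℓ ≤ α * b - A := by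
    by_cases ht : t ∈ Ioo a b
    · exact ⟨A, hA ▸ hmono ht.1.le, by nlinarith [ht.2]⟩
    · exact ⟨A + α * (t - a), hf.coe_chord_le hab hA hB ht, by nlinarith⟩
  calc ((α * t : ℝ) : EReal) - f t ≤ ((α * t : ℝ) : EReal) - ℓ :=
        EReal.sub_le_sub le_rfl hℓ
    _ ≤ ((α * b - A : ℝ) : EReal) := by exact_mod_cast hℓt

lemma exists_pos_apply_lt (hf : EConvex f) {δ : ℝ} (hδ : 0 < δ) (hfδ : f δ ≠ ⊤) {z : ℝ}
    (hz : f 0 < z) : ∃ x, 0 < x ∧ f x < z := by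
  obtain ⟨w, hw, hwz⟩ := EReal.exists_between_coe_real hz
  set D := (f δ).toReal
  have hcont : Continuous fun s : ℝ => s * D + (1 - s) * w := by fun_prop
  have hnear : ∀ᶠ s in 𝓝 (0 : ℝ), s ≤ 1 ∧ s * D + (1 - s) * w < z :=
    (eventually_le_nhds one_pos).and <|
      (hcont.tendsto' 0 w (by ring)).eventually (gt_mem_nhds (EReal.coe_lt_coe_iff.1 hwz))
  have hright : ∀ᶠ s in 𝓝[>] (0 : ℝ), (s ≤ 1 ∧ s * D + (1 - s) * w < z) ∧ 0 < s :=
    (hnear.filter_mono nhdsWithin_le_nhds).and self_mem_nhdsWithin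
  obtain ⟨s, ⟨hs₁, hlt⟩, hs₀⟩ := hright.exists
  refine ⟨s * δ, mul_pos hs₀ hδ, ?_⟩
  have hs₀' : (0 : EReal) ≤ s := by exact_mod_cast hs₀.le
  have hs₁' : (0 : EReal) ≤ ((1 - s : ℝ) : EReal) := by exact_mod_cast sub_nonneg.2 hs₁
  calc f (s * δ) = f (s * δ + (1 - s) * 0) := by simp
    _ ≤ (s : EReal) * f δ + ((1 - s : ℝ) : EReal) * f 0 := hf δ 0 s hs₀.le hs₁
    _ ≤ (s : EReal) * D + ((1 - s : ℝ) : EReal) * w :=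
      add_le_add (mul_le_mul_of_nonneg_left (EReal.le_coe_toReal hfδ) hs₀')
        (mul_le_mul_of_nonneg_left hw.le hs₁')
    _ < z := by exact_mod_cast hlt

lemma apply_zero_ne_bot (hf : EConvex f) (hpos : ∀ x, 0 < x → f x ≠ ⊥) : f 0 ≠ ⊥ := by
  intro h0
  have := hf 1 0 (1 / 2) (by norm_num) (by norm_num)
  rw [h0, EReal.coe_mul_bot_of_pos (by norm_num), EReal.add_bot, le_bot_iff] at this
  exact hpos _ (by norm_num) this

lemma neg_apply_zero_le_eConj_comp_exp_zero (hf : EConvex f) {δ : ℝ} (hδ : 0 < δ)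
    (hfδ : f δ ≠ ⊤) : -f 0 ≤ eConj (fun t => f (Real.exp t)) 0 := by
  rw [EReal.neg_le]
  refine EReal.le_of_forall_lt_iff_le.1 fun z hz => ?_
  obtain ⟨x, hx, hfx⟩ := hf.exists_pos_apply_lt hδ hfδ hz
  exact (EReal.neg_le.1 (neg_le_eConj_comp_exp_zero f hx)).trans hfx.le

lemma iInf_eConj_le_neg_apply_zero (hf : EConvex f) (hmono : Monotone f) {δ : ℝ} (hδ : 0 < δ)
    (hfδ : f δ ≠ ⊤) (hpos : ∀ x, 0 < x → f x ≠ ⊥) :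
    ⨅ α ∈ Ici (0 : ℝ), eConj f α ≤ -f 0 := by
  have hf₀ : f 0 ≠ ⊤ := ne_top_of_le_ne_top hfδ (hmono hδ.le)
  obtain ⟨F₀, hF₀⟩ : ∃ F₀ : ℝ, f 0 = F₀ :=
    ⟨_, (EReal.coe_toReal hf₀ (hf.apply_zero_ne_bot hpos)).symm⟩
  rw [hF₀]
  refine EReal.le_of_forall_lt_iff_le.1 fun z hz => ?_
  have hz' : -F₀ < z := by exact_mod_cast hz
  obtain ⟨x, hx, hfx⟩ := hf.exists_pos_apply_lt hδ hfδ (z := z + 2 * F₀)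
    (by rw [hF₀]; exact_mod_cast (by linarith : F₀ < z + 2 * F₀))
  obtain ⟨X, hX⟩ : ∃ X : ℝ, f x = X :=
    ⟨_, (EReal.coe_toReal hfx.ne_top (hpos x hx)).symm⟩
  have hX' : X < z + 2 * F₀ := by exact_mod_cast hX ▸ hfx
  have hslope : 0 ≤ (X - F₀) / (x - 0) :=
    div_nonneg (sub_nonneg.2 (by exact_mod_cast hF₀ ▸ hX ▸ hmono hx.le)) (by linarith)
  calc ⨅ α ∈ Ici (0 : ℝ), eConj f α ≤ eConj f ((X - F₀) / (x - 0)) :=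
        iInf₂_le _ hslope
    _ ≤ (((X - F₀) / (x - 0) * x - F₀ : ℝ) : EReal) :=
        hf.eConj_chord_slope_le hmono hx hF₀ hX
    _ ≤ z := by
      rw [sub_zero, div_mul_cancel₀ _ hx.ne']
      exact_mod_cast (by linarith : X - F₀ - F₀ ≤ z)

end EConvex

theorem conj_comp_exp_at_zero_general
    (f : ℝ → EReal)
    (hconv : ∀ x y s : ℝ, 0 ≤ s → s ≤ 1 →
      f (s * x + (1 - s) * y) ≤ (s : EReal) * f x + ((1 - s : ℝ) : EReal) * f y)
    (hmono : Monotone f)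
    (hdom : {t : ℝ | f t < ⊤} ∈ nhds (0 : ℝ))
    (hadom : eConj (fun t => f (Real.exp t)) 0 < ⊤) :
    eConj (fun t => f (Real.exp t)) 0 = ⨅ α ∈ Set.Ici (0 : ℝ), eConj f α := by
  have hright : ∀ᶠ x in 𝓝[>] (0 : ℝ), f x < ⊤ ∧ 0 < x :=
    Eventually.and (mem_nhdsWithin_of_mem_nhds hdom) self_mem_nhdsWithin
  obtain ⟨δ, hfδ, hδ⟩ := hright.exists
  have hpos : ∀ x, 0 < x → f x ≠ ⊥ := fun x hx hfx => by
    simpa [hfx] using (neg_le_eConj_comp_exp_zero f hx).trans_lt hadom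
  refine le_antisymm (le_iInf₂ fun α hα => eConj_comp_exp_zero_le f hα) ?_
  calc ⨅ α ∈ Ici (0 : ℝ), eConj f α ≤ -f 0 :=
        EConvex.iInf_eConj_le_neg_apply_zero hconv hmono hδ hfδ.ne hpos
    _ ≤ eConj (fun t => f (Real.exp t)) 0 :=
        EConvex.neg_apply_zero_le_eConj_comp_exp_zero hconv hδ hfδ.ne

/-- Let `f : ℝ → (−∞,+∞]` be convex, increasing and lower semicontinuous
with effective domain a neighborhood of zero.  If `0` belongs to the effective domain of
`(f ∘ exp)*`, then `(f ∘ exp)*(0) = inf_{α ≥ 0} f*(α)`. -/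
theorem conj_comp_exp_at_zero
    (f : ℝ → EReal)
    (hconv : ∀ x y s : ℝ, 0 ≤ s → s ≤ 1 →
      f (s * x + (1 - s) * y) ≤ (s : EReal) * f x + ((1 - s : ℝ) : EReal) * f y)
    (hmono : Monotone f)
    (hlsc : LowerSemicontinuous f)
    (hdom : {t : ℝ | f t < ⊤} ∈ nhds (0 : ℝ))
    (hadom : eConj (fun t => f (Real.exp t)) 0 < ⊤) :
    eConj (fun t => f (Real.exp t)) 0 = ⨅ α ∈ Set.Ici (0 : ℝ), eConj f α :=
  conj_comp_exp_at_zero_general f hconv hmono hdom hadom
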